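/- arXiv:gr-qc/0204044 — 2 statements merged into one kernel-verified Lean document; each statement's English description precedes it below -/
import Mathlib

section
/- Let γ > 0, C ≥ 0, and let E : [τ₀, ∞) → ℝ be a nonnegative differentiable function, and π : ℝ → ℝ a continuous nonnegative function, such that E'(τ) ≤ -2γ E(τ) + C·π(τ - τ₀)·exp(-γ(τ - τ₀))·E(τ)^{1/2} for all τ ≥ τ₀. Then for all τ ≥ τ₀, E(τ)^{1/2} ≤ (E(τ₀)^{1/2} + (C/2)·∫_{τ₀}^{τ} π(s - τ₀) ds) · exp(-γ(τ - τ₀)). -/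
/-!
With `g τ = exp (2γ (τ - τ₀)) E τ` the integrating factor absorbs the damping, leaving
`g' ≤ C π(τ - τ₀) √g`, i.e. `(√g)' ≤ (C/2) π(τ - τ₀)` where `g > 0`. Integrating bounds `√g`, and
dividing by `exp (γ (τ - τ₀))` gives the claim. Because `√g` need not be differentiable where
`g = 0`, the comparison is run on `√(g + ε)`, which stays differentiable, and `ε → 0`.
-/

open Real MeasureTheory Set

section SqrtComparison

variable {g g' p : ℝ → ℝ} {a b : ℝ}

theorem antitoneOn_sqrt_add_sub_integral (hab : a ≤ b) (hg : ContinuousOn g (Icc a b))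
    (hg0 : ∀ t ∈ Icc a b, 0 ≤ g t) (hg' : ∀ t ∈ Ioo a b, HasDerivAt g (g' t) t)
    (hbound : ∀ t ∈ Ioo a b, g' t ≤ 2 * p t * √(g t))
    (hp : ContinuousOn p (Icc a b)) (hp0 : ∀ t ∈ Icc a b, 0 ≤ p t) {ε : ℝ} (hε : 0 < ε) :
    AntitoneOn (fun t => √(g t + ε) - ∫ s in a..t, p s) (Icc a b) := by
  have hprim : ∀ t ∈ Ioo a b, HasDerivAt (fun u => ∫ s in a..u, p s) (p t) t := fun t ht =>
    intervalIntegral.integral_hasDerivAt_right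
      ((hp.mono (uIcc_subset_Icc (left_mem_Icc.2 hab) (Ioo_subset_Icc_self ht))).intervalIntegrable)
      ((hp.mono Ioo_subset_Icc_self).stronglyMeasurableAtFilter isOpen_Ioo t ht)
      (hp.continuousAt (Icc_mem_nhds ht.1 ht.2))
  have hderiv : ∀ t ∈ Ioo a b, HasDerivAt (fun t => √(g t + ε) - ∫ s in a..t, p s)
      (g' t / (2 * √(g t + ε)) - p t) t := fun t ht =>
    (((hg' t ht).add_const ε).sqrt (by linarith [hg0 t (Ioo_subset_Icc_self ht)])).sub
      (hprim t ht)
  refine antitoneOn_of_deriv_nonpos (convex_Icc a b) ?_ ?_ ?_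
  · refine (hg.add continuousOn_const).sqrt.sub ?_
    simpa [uIcc_of_le hab] using
      intervalIntegral.continuousOn_primitive_interval (μ := volume) (a := a) (b := b)
        (by simpa [uIcc_of_le hab] using hp.integrableOn_Icc)
  · rw [interior_Icc]
    exact fun t ht => (hderiv t ht).differentiableAt.differentiableWithinAt
  · rw [interior_Icc]
    intro t ht
    have hpt := hp0 t (Ioo_subset_Icc_self ht)
    have hpos : 0 < √(g t + ε) := sqrt_pos.2 (by linarith [hg0 t (Ioo_subset_Icc_self ht)])
    rw [(hderiv t ht).deriv, sub_nonpos, div_le_iff₀ (by positivity)]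
    calc g' t ≤ 2 * p t * √(g t) := hbound t ht
      _ ≤ 2 * p t * √(g t + ε) := by gcongr; linarith
      _ = p t * (2 * √(g t + ε)) := by ring

theorem sqrt_le_sqrt_add_integral_of_hasDerivAt_le (hab : a ≤ b) (hg : ContinuousOn g (Icc a b))
    (hg0 : ∀ t ∈ Icc a b, 0 ≤ g t) (hg' : ∀ t ∈ Ioo a b, HasDerivAt g (g' t) t)
    (hbound : ∀ t ∈ Ioo a b, g' t ≤ 2 * p t * √(g t))
    (hp : ContinuousOn p (Icc a b)) (hp0 : ∀ t ∈ Icc a b, 0 ≤ p t) :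
    √(g b) ≤ √(g a) + ∫ t in a..b, p t := by
  refine le_of_forall_pos_le_add fun δ hδ => ?_
  have hanti := antitoneOn_sqrt_add_sub_integral hab hg hg0 hg' hbound hp hp0 (pow_pos hδ 2)
    (left_mem_Icc.2 hab) (right_mem_Icc.2 hab) hab
  have hga := hg0 a (left_mem_Icc.2 hab)
  have hsqrt : √(g a + δ ^ 2) ≤ √(g a) + δ := by
    rw [sqrt_le_left (by positivity)]
    nlinarith [sq_sqrt hga, sqrt_nonneg (g a)]
  have hmono : √(g b) ≤ √(g b + δ ^ 2) := sqrt_le_sqrt (le_add_of_nonneg_right (by positivity))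
  simp only [intervalIntegral.integral_same, sub_zero] at hanti
  linarith

end SqrtComparison

theorem sqrt_exp_two_mul_mul (x y : ℝ) : √(exp (2 * x) * y) = exp x * √y := by
  rw [sqrt_mul (exp_pos _).le, mul_comm 2 x, exp_mul, rpow_two, sqrt_sq (exp_pos x).le]

theorem stmt_1_general (γ τ₀ C : ℝ) (hC : 0 ≤ C)
    (E : ℝ → ℝ) (Pi : ℝ → ℝ)
    (hE0 : ∀ τ, τ₀ ≤ τ → 0 ≤ E τ)
    (hdiff : ∀ τ, τ₀ ≤ τ → DifferentiableAt ℝ E τ)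
    (hPic : Continuous Pi) (hPi0 : ∀ s, 0 ≤ Pi s)
    (hineq : ∀ τ, τ₀ ≤ τ →
      deriv E τ ≤ -2 * γ * E τ + C * Pi (τ - τ₀) * Real.exp (-γ * (τ - τ₀)) * Real.sqrt (E τ)) :
    ∀ τ, τ₀ ≤ τ →
      Real.sqrt (E τ) ≤ (Real.sqrt (E τ₀) + (C / 2) * ∫ s in τ₀..τ, Pi (s - τ₀)) *
        Real.exp (-γ * (τ - τ₀)) := by
  intro τ hτ
  set w : ℝ → ℝ := fun t => γ * (t - τ₀) with hw
  have hderiv : ∀ t, τ₀ ≤ t → HasDerivAt (fun t => exp (2 * w t) * E t)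
      (exp (2 * w t) * (deriv E t + 2 * γ * E t)) t := by
    intro t ht
    have hexp : HasDerivAt (fun t => exp (2 * w t)) (exp (2 * w t) * (2 * γ)) t := by
      simpa using (((hasDerivAt_id t).sub_const τ₀).const_mul γ |>.const_mul 2).exp
    exact (hexp.mul (hdiff t ht).hasDerivAt).congr_deriv (by ring)
  have hbound : ∀ t, τ₀ ≤ t → exp (2 * w t) * (deriv E t + 2 * γ * E t) ≤
      2 * (C / 2 * Pi (t - τ₀)) * √(exp (2 * w t) * E t) := by
    intro t ht
    have hexp : exp (2 * w t) * exp (-γ * (t - τ₀)) = exp (w t) := by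
      rw [← exp_add, hw]; ring_nf
    calc exp (2 * w t) * (deriv E t + 2 * γ * E t)
        ≤ exp (2 * w t) * (C * Pi (t - τ₀) * exp (-γ * (t - τ₀)) * √(E t)) := by
          gcongr; linarith [hineq t ht]
      _ = 2 * (C / 2 * Pi (t - τ₀)) * √(exp (2 * w t) * E t) := by
          rw [sqrt_exp_two_mul_mul, ← hexp]; ring
  have key := sqrt_le_sqrt_add_integral_of_hasDerivAt_le hτ
    (fun t ht => (hderiv t ht.1).continuousAt.continuousWithinAt)
    (fun t ht => mul_nonneg (exp_pos _).le (hE0 t ht.1)) (fun t ht => hderiv t ht.1.le)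
    (fun t ht => hbound t ht.1.le) (by fun_prop) (fun t _ => by have := hPi0 (t - τ₀); positivity)
  rw [sqrt_exp_two_mul_mul, sqrt_exp_two_mul_mul, intervalIntegral.integral_const_mul] at key
  calc √(E τ) = exp (-w τ) * (exp (w τ) * √(E τ)) := by rw [← mul_assoc, ← exp_add]; simp
    _ ≤ exp (-w τ) * (exp (w τ₀) * √(E τ₀) + C / 2 * ∫ s in τ₀..τ, Pi (s - τ₀)) := by gcongr
    _ = _ := by simp only [hw, sub_self, mul_zero, exp_zero, one_mul, neg_mul]; ring

theorem stmt_1 (γ τ₀ C : ℝ) (hγ : 0 < γ) (hC : 0 ≤ C)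
    (E : ℝ → ℝ) (Pi : ℝ → ℝ)
    (hE0 : ∀ τ, τ₀ ≤ τ → 0 ≤ E τ)
    (hdiff : ∀ τ, τ₀ ≤ τ → DifferentiableAt ℝ E τ)
    (hPic : Continuous Pi) (hPi0 : ∀ s, 0 ≤ Pi s)
    (hineq : ∀ τ, τ₀ ≤ τ →
      deriv E τ ≤ -2 * γ * E τ + C * Pi (τ - τ₀) * Real.exp (-γ * (τ - τ₀)) * Real.sqrt (E τ)) :
    ∀ τ, τ₀ ≤ τ →
      Real.sqrt (E τ) ≤ (Real.sqrt (E τ₀) + (C / 2) * ∫ s in τ₀..τ, Pi (s - τ₀)) *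
        Real.exp (-γ * (τ - τ₀)) :=
  stmt_1_general γ τ₀ C hC E Pi hE0 hdiff hPic hPi0 hineq
end

section
/- Let H : [τ₀, ∞) → ℝ be nonnegative and differentiable, γ > 0, and W₁, W₂ : ℝ → ℝ continuous nonnegative functions such that H'(τ) ≤ W₁(τ - τ₀)·exp(-γ(τ-τ₀)/2)·H(τ)^{1/2} + W₂(τ - τ₀)·exp(-γ(τ-τ₀)/2)·H(τ) for all τ ≥ τ₀, where ∫_0^∞ (W₁(u) + W₂(u))·exp(-γu/2) du < ∞. Then H is bounded on [τ₀, ∞). -/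
/-!
Since `√h ≤ 1 + h` for `h ≥ 0`, the differential inequality becomes the linear one
`(1 + H)' ≤ w (1 + H)` with `w τ = (W₁ + W₂)(τ - τ₀) e^{-γ(τ - τ₀)/2}`. Grönwall gives
`1 + H τ ≤ (1 + H τ₀) exp (∫_{τ₀}^τ w)`, and the exponent is bounded by `∫_0^∞ w(τ₀ + u) du < ∞`.
-/

open Real MeasureTheory

lemma Real.sqrt_le_one_add {x : ℝ} (hx : 0 ≤ x) : √x ≤ 1 + x := by
  nlinarith [sq_sqrt hx, sqrt_nonneg x]

lemma mul_sqrt_add_mul_le_add_mul_one_add {a b x : ℝ} (ha : 0 ≤ a) (hb : 0 ≤ b) (hx : 0 ≤ x) :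
    a * √x + b * x ≤ (a + b) * (1 + x) := by
  nlinarith [mul_le_mul_of_nonneg_left (Real.sqrt_le_one_add hx) ha]

lemma le_mul_exp_integral_of_deriv_le_mul {u w : ℝ → ℝ} {a : ℝ} (hw : Continuous w)
    (hu : ∀ τ, a ≤ τ → DifferentiableAt ℝ u τ)
    (hle : ∀ τ, a ≤ τ → deriv u τ ≤ w τ * u τ) {τ : ℝ} (hτ : a ≤ τ) :
    u τ ≤ u a * exp (∫ s in a..τ, w s) := by
  set V : ℝ → ℝ := fun t => ∫ s in a..t, w s
  have hV : ∀ t, HasDerivAt V (w t) t := fun t =>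
    intervalIntegral.integral_hasDerivAt_right (hw.intervalIntegrable _ _)
      (hw.stronglyMeasurableAtFilter _ _) hw.continuousAt
  -- `u e^{-V}` is antitone, since its derivative is `(u' - w u) e^{-V} ≤ 0`.
  have hderiv : ∀ t, a ≤ t →
      HasDerivAt (fun t => u t * exp (-V t)) ((deriv u t - w t * u t) * exp (-V t)) t := by
    intro t ht
    have hprod : HasDerivAt (fun t => u t * exp (-V t))
        (deriv u t * exp (-V t) + u t * (exp (-V t) * -w t)) t :=
      (hu t ht).hasDerivAt.mul (hV t).neg.exp
    exact hprod.congr_deriv (by ring)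
  have hanti : AntitoneOn (fun t => u t * exp (-V t)) (Set.Ici a) := by
    apply antitoneOn_of_hasDerivWithinAt_nonpos (convex_Ici a)
      (fun t ht => (hderiv t ht).continuousAt.continuousWithinAt)
      (fun t ht => (hderiv t (interior_subset ht)).hasDerivWithinAt)
    intro t ht
    exact mul_nonpos_of_nonpos_of_nonneg (sub_nonpos.2 (hle t (interior_subset ht)))
      (exp_pos _).le
  have h := hanti Set.self_mem_Ici hτ hτ
  simp only [V, intervalIntegral.integral_same, neg_zero, exp_zero, mul_one] at h
  calc u τ = u τ * exp (-V τ) * exp (V τ) := by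
        rw [mul_assoc, ← exp_add, neg_add_cancel, exp_zero, mul_one]
    _ ≤ u a * exp (V τ) := mul_le_mul_of_nonneg_right h (exp_pos _).le

lemma integral_comp_sub_le_integral_Ioi {g : ℝ → ℝ} (hg : ∀ u, 0 ≤ g u)
    (hint : IntegrableOn g (Set.Ioi 0)) {a τ : ℝ} (hτ : a ≤ τ) :
    ∫ s in a..τ, g (s - a) ≤ ∫ u in Set.Ioi 0, g u := by
  rw [intervalIntegral.integral_comp_sub_right g a, sub_self,
    intervalIntegral.integral_of_le (sub_nonneg.2 hτ)]
  exact setIntegral_mono_set hint (Filter.Eventually.of_forall hg)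
    Set.Ioc_subset_Ioi_self.eventuallyLE

theorem stmt_8_general (γ τ₀ : ℝ)
    (H W₁ W₂ : ℝ → ℝ)
    (hH0 : ∀ τ, τ₀ ≤ τ → 0 ≤ H τ)
    (hdiff : ∀ τ, τ₀ ≤ τ → DifferentiableAt ℝ H τ)
    (hW₁c : Continuous W₁) (hW₂c : Continuous W₂)
    (hW₁0 : ∀ u, 0 ≤ W₁ u) (hW₂0 : ∀ u, 0 ≤ W₂ u)
    (hint : IntegrableOn (fun u => (W₁ u + W₂ u) * Real.exp (-γ * u / 2)) (Set.Ioi (0 : ℝ)))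
    (hineq : ∀ τ, τ₀ ≤ τ →
      deriv H τ ≤ W₁ (τ - τ₀) * Real.exp (-γ * (τ - τ₀) / 2) * Real.sqrt (H τ) +
        W₂ (τ - τ₀) * Real.exp (-γ * (τ - τ₀) / 2) * H τ) :
    ∃ M : ℝ, ∀ τ, τ₀ ≤ τ → H τ ≤ M := by
  set g : ℝ → ℝ := fun u => (W₁ u + W₂ u) * exp (-γ * u / 2)
  have hg : Continuous (fun τ => g (τ - τ₀)) := by fun_prop
  have hg0 : ∀ u, 0 ≤ g u := fun u => mul_nonneg (add_nonneg (hW₁0 u) (hW₂0 u)) (exp_pos _).le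
  have hlin : ∀ τ, τ₀ ≤ τ → deriv (fun τ => 1 + H τ) τ ≤ g (τ - τ₀) * (1 + H τ) := by
    intro τ hτ
    have he := (exp_pos (-γ * (τ - τ₀) / 2)).le
    rw [deriv_const_add]
    refine (hineq τ hτ).trans (le_of_le_of_eq (mul_sqrt_add_mul_le_add_mul_one_add
      (mul_nonneg (hW₁0 _) he) (mul_nonneg (hW₂0 _) he) (hH0 τ hτ)) ?_)
    ring
  refine ⟨(1 + H τ₀) * exp (∫ u in Set.Ioi 0, g u) - 1, fun τ hτ => ?_⟩
  have hgron := le_mul_exp_integral_of_deriv_le_mul hg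
    (fun t ht => (hdiff t ht).const_add 1) hlin hτ
  have hexp := exp_le_exp.2 (integral_comp_sub_le_integral_Ioi hg0 hint hτ)
  nlinarith [hH0 τ₀ le_rfl]

theorem stmt_8 (γ τ₀ : ℝ) (hγ : 0 < γ)
    (H W₁ W₂ : ℝ → ℝ)
    (hH0 : ∀ τ, τ₀ ≤ τ → 0 ≤ H τ)
    (hdiff : ∀ τ, τ₀ ≤ τ → DifferentiableAt ℝ H τ)
    (hW₁c : Continuous W₁) (hW₂c : Continuous W₂)
    (hW₁0 : ∀ u, 0 ≤ W₁ u) (hW₂0 : ∀ u, 0 ≤ W₂ u)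
    (hint : IntegrableOn (fun u => (W₁ u + W₂ u) * Real.exp (-γ * u / 2)) (Set.Ioi (0 : ℝ)))
    (hineq : ∀ τ, τ₀ ≤ τ →
      deriv H τ ≤ W₁ (τ - τ₀) * Real.exp (-γ * (τ - τ₀) / 2) * Real.sqrt (H τ) +
        W₂ (τ - τ₀) * Real.exp (-γ * (τ - τ₀) / 2) * H τ) :
    ∃ M : ℝ, ∀ τ, τ₀ ≤ τ → H τ ≤ M :=
  stmt_8_general γ τ₀ H W₁ W₂ hH0 hdiff hW₁c hW₂c hW₁0 hW₂0 hint hineq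
end
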